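/- Let V be a symmetric positive definite real d×d matrix, θ̂ ∈ ℝ^d, β ≥ 0, and B := {θ ∈ ℝ^d : ‖θ̂ − θ‖_V ≤ β}. Let α ∈ (0,1] and 0 < r_l ≤ r_b, and suppose θ* ∈ B, ψ*, ψ_b ∈ ℝ^d with ‖ψ*‖₂ ≤ 1, ‖ψ_b‖₂ ≤ 1, ψ_bᵀθ* = r_b, (ψ*)ᵀθ* ≥ r_b, and λ_min(V) ≥ (2(2 − α)β/(α r_l))². Then (ψ*)ᵀθ̂ ≥ β/√(λ_min(V)) + (1 − α)·sup_{v ∈ B} ψ_bᵀ v. -/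

import Mathlib

open Matrix

open scoped Classical in
/-- smallest eigenvalue of a real matrix (junk value 0 if not Hermitian) -/
noncomputable def lamMin {d : ℕ} (V : Matrix (Fin d) (Fin d) ℝ) : ℝ :=
  if h : V.IsHermitian then ⨅ i, h.eigenvalues i else 0

open scoped Classical in
/-- largest eigenvalue of a real matrix (junk value 0 if not Hermitian) -/
noncomputable def lamMax {d : ℕ} (V : Matrix (Fin d) (Fin d) ℝ) : ℝ :=
  if h : V.IsHermitian then ⨆ i, h.eigenvalues i else 0

/-- weighted norm ‖z‖_V = √(zᵀ V z) -/
noncomputable def wnorm {d : ℕ} (V : Matrix (Fin d) (Fin d) ℝ) (z : Fin d → ℝ) : ℝ :=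
  Real.sqrt (z ⬝ᵥ V.mulVec z)

/-- Euclidean norm of a vector in ℝ^d -/
noncomputable def eucNorm {d : ℕ} (z : Fin d → ℝ) : ℝ :=
  Real.sqrt (z ⬝ᵥ z)

/-! For θ ∈ B and ‖ψ‖₂ ≤ 1, Cauchy–Schwarz and ‖z‖_V ≥ √λ_min ‖z‖₂ give
|ψᵀθ̂ − ψᵀθ| ≤ ε := β/√λ_min. Hence ψ*ᵀθ̂ ≥ r_b − ε, while every ψ_bᵀv with v ∈ B is at most
ψ_bᵀθ* + 2ε = r_b + 2ε. The claim then reduces to 2(2 − α)ε ≤ α r_l ≤ α r_b, which is exactly the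
eigenvalue condition. -/

open scoped MatrixOrder in
theorem Matrix.IsHermitian.mul_dotProduct_self_le_dotProduct_mulVec {n : Type*} [Fintype n]
    [DecidableEq n] {A : Matrix n n ℝ} (hA : A.IsHermitian) {c : ℝ}
    (hc : ∀ i, c ≤ hA.eigenvalues i) (x : n → ℝ) : c * (x ⬝ᵥ x) ≤ x ⬝ᵥ A *ᵥ x := by
  have hle : algebraMap ℝ (Matrix n n ℝ) c ≤ A := by
    rw [algebraMap_le_iff_le_spectrum hA.isSelfAdjoint, hA.spectrum_real_eq_range_eigenvalues]
    rintro _ ⟨i, rfl⟩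
    exact hc i
  simpa [Algebra.algebraMap_eq_smul_one, sub_mulVec, dotProduct_sub, smul_mulVec,
    dotProduct_smul] using (Matrix.le_iff.mp hle).re_dotProduct_nonneg x

section

variable {d : ℕ} {V : Matrix (Fin d) (Fin d) ℝ}

theorem lamMin_of_isHermitian (hV : V.IsHermitian) : lamMin V = ⨅ i, hV.eigenvalues i :=
  dif_pos hV

theorem lamMin_pos (hV : V.PosDef) (hd : d ≠ 0) : 0 < lamMin V := by
  have : NeZero d := ⟨hd⟩
  obtain ⟨i, hi⟩ := exists_eq_ciInf_of_finite (f := hV.isHermitian.eigenvalues)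
  rw [lamMin_of_isHermitian hV.isHermitian, ← hi]
  exact hV.eigenvalues_pos i

theorem lamMin_mul_dotProduct_self_le (hV : V.IsHermitian) (z : Fin d → ℝ) :
    lamMin V * (z ⬝ᵥ z) ≤ z ⬝ᵥ V *ᵥ z := by
  rw [lamMin_of_isHermitian hV]
  exact hV.mul_dotProduct_self_le_dotProduct_mulVec
    (fun i ↦ ciInf_le (Set.finite_range _).bddBelow i) z

theorem eucNorm_mul_sqrt_lamMin_le_wnorm (hV : V.IsHermitian) (z : Fin d → ℝ) :
    eucNorm z * √(lamMin V) ≤ wnorm V z := by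
  have hz : 0 ≤ z ⬝ᵥ z := Finset.sum_nonneg fun i _ ↦ mul_self_nonneg (z i)
  rw [eucNorm, wnorm, ← Real.sqrt_mul hz, mul_comm]
  exact Real.sqrt_le_sqrt (lamMin_mul_dotProduct_self_le hV z)

theorem abs_dotProduct_le_eucNorm_mul_eucNorm (a b : Fin d → ℝ) :
    |a ⬝ᵥ b| ≤ eucNorm a * eucNorm b := by
  have cauchy_schwarz (a : Fin d → ℝ) : a ⬝ᵥ b ≤ eucNorm a * eucNorm b := by
    simpa [eucNorm, dotProduct, sq] using Real.sum_mul_le_sqrt_mul_sqrt Finset.univ a b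
  have hneg : eucNorm (-a) = eucNorm a := by simp [eucNorm]
  refine abs_le.mpr ⟨?_, cauchy_schwarz a⟩
  have := cauchy_schwarz (-a)
  rw [hneg, neg_dotProduct] at this
  linarith

theorem abs_dotProduct_le_div_sqrt_lamMin (hV : V.IsHermitian) (hpos : 0 < lamMin V)
    {ψ w : Fin d → ℝ} {β : ℝ} (hψ : eucNorm ψ ≤ 1) (hw : wnorm V w ≤ β) :
    |ψ ⬝ᵥ w| ≤ β / √(lamMin V) := by
  have hw' : eucNorm w ≤ β / √(lamMin V) :=
    (le_div_iff₀ (Real.sqrt_pos.mpr hpos)).mpr ((eucNorm_mul_sqrt_lamMin_le_wnorm hV w).trans hw)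
  calc |ψ ⬝ᵥ w| ≤ eucNorm ψ * eucNorm w := abs_dotProduct_le_eucNorm_mul_eucNorm ψ w
    _ ≤ 1 * (β / √(lamMin V)) := mul_le_mul hψ hw' (Real.sqrt_nonneg _) zero_le_one
    _ = β / √(lamMin V) := one_mul _

end

theorem div_sqrt_le_of_div_sq_le {a b x : ℝ} (hb : 0 < b) (hx : 0 < x) (h : (a / b) ^ 2 ≤ x) :
    a / √x ≤ b := by
  have hab : a / b ≤ √x := (le_abs_self _).trans (Real.abs_le_sqrt h)
  rw [div_le_iff₀ (Real.sqrt_pos.mpr hx)]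
  rw [div_le_iff₀ hb] at hab
  linarith

theorem stmt15_general {d : ℕ} (V : Matrix (Fin d) (Fin d) ℝ) (hV : V.PosDef)
    (θhat : Fin d → ℝ) (β : ℝ)
    (B : Set (Fin d → ℝ)) (hB : B = {θ : Fin d → ℝ | wnorm V (θhat - θ) ≤ β})
    (α rl rb : ℝ) (hα0 : 0 < α) (hα1 : α ≤ 1) (hrl : 0 < rl) (hlb : rl ≤ rb)
    (θstar ψstar ψb : Fin d → ℝ) (hθB : θstar ∈ B)
    (hψstar : eucNorm ψstar ≤ 1) (hψb : eucNorm ψb ≤ 1)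
    (hbase : ψb ⬝ᵥ θstar = rb)
    (h1 : ψstar ⬝ᵥ θstar ≥ rb)
    (hlmin : lamMin V ≥ (2 * (2 - α) * β / (α * rl)) ^ 2) :
    ψstar ⬝ᵥ θhat ≥ β / Real.sqrt (lamMin V) +
      (1 - α) * ⨆ v : B, ψb ⬝ᵥ (v : Fin d → ℝ) := by
  have hd : d ≠ 0 := by
    rintro rfl
    simp only [dotProduct, Finset.univ_eq_empty, Finset.sum_empty] at hbase
    linarith
  have hpos := lamMin_pos hV hd
  set ε := β / √(lamMin V)
  have close {ψ : Fin d → ℝ} (hψ : eucNorm ψ ≤ 1) {θ : Fin d → ℝ} (hθ : θ ∈ B) :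
      |ψ ⬝ᵥ θhat - ψ ⬝ᵥ θ| ≤ ε := by
    rw [hB] at hθ
    rw [← dotProduct_sub]
    exact abs_dotProduct_le_div_sqrt_lamMin hV.isHermitian hpos hψ hθ
  have hstar : rb - ε ≤ ψstar ⬝ᵥ θhat := by
    linarith [(abs_le.mp (close hψstar hθB)).1]
  have hsup : (⨆ v : B, ψb ⬝ᵥ (v : Fin d → ℝ)) ≤ rb + 2 * ε := by
    have : Nonempty B := ⟨⟨θstar, hθB⟩⟩
    refine ciSup_le fun v ↦ ?_
    linarith [(abs_le.mp (close hψb v.2)).1, (abs_le.mp (close hψb hθB)).2]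
  have hε : 2 * (2 - α) * ε ≤ α * rl := by
    rw [← mul_div_assoc]
    exact div_sqrt_le_of_div_sq_le (by positivity) hpos hlmin
  have hscaled := mul_le_mul_of_nonneg_left hsup (sub_nonneg.mpr hα1)
  linarith [mul_le_mul_of_nonneg_left hlb hα0.le]

theorem stmt15 {d : ℕ} (V : Matrix (Fin d) (Fin d) ℝ) (hV : V.PosDef)
    (θhat : Fin d → ℝ) (β : ℝ) (hβ : 0 ≤ β)
    (B : Set (Fin d → ℝ)) (hB : B = {θ : Fin d → ℝ | wnorm V (θhat - θ) ≤ β})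
    (α rl rb : ℝ) (hα0 : 0 < α) (hα1 : α ≤ 1) (hrl : 0 < rl) (hlb : rl ≤ rb)
    (θstar ψstar ψb : Fin d → ℝ) (hθB : θstar ∈ B)
    (hψstar : eucNorm ψstar ≤ 1) (hψb : eucNorm ψb ≤ 1)
    (hbase : ψb ⬝ᵥ θstar = rb)
    (h1 : ψstar ⬝ᵥ θstar ≥ rb)
    (hlmin : lamMin V ≥ (2 * (2 - α) * β / (α * rl)) ^ 2) :
    ψstar ⬝ᵥ θhat ≥ β / Real.sqrt (lamMin V) +
      (1 - α) * ⨆ v : B, ψb ⬝ᵥ (v : Fin d → ℝ) :=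
  stmt15_general V hV θhat β B hB α rl rb hα0 hα1 hrl hlb θstar ψstar ψb hθB hψstar hψb hbase h1
    hlmin
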